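/- arXiv:math/0509097 — 2 statements merged into one kernel-verified Lean document; each statement's English description precedes it below -/
import Mathlib

section
/- The set K⁺ = K ∪ ⋃_{d ∈ D} F(d) is a closed subset of ℝ². -/
open Set Topology

/-- The Cantor space `2^ℕ`, with coordinates indexed by the positive integers. -/
abbrev Cant : Type := ℕ+ → Bool

/-- The support of a point of the Cantor space, as a set of (positive) natural numbers. -/
def ksupp (x : Cant) : Set ℕ := {i | ∃ h : 0 < i, x ⟨i, h⟩ = true}

/-- The plane. -/
abbrev Plane : Type := EuclideanSpace ℝ (Fin 2)

/-- `N_d = max supp d` (with `sSup ∅ = 0` for the zero point). -/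
noncomputable def Nd (d : Cant) : ℕ := sSup (ksupp d)

/-- The basic clopen set `V_d = {y : y(i) = d(i) for 1 ≤ i ≤ N_d}`. -/
noncomputable def Vd (d : Cant) : Set Cant :=
  {y | ∀ i : ℕ+, (i : ℕ) ≤ Nd d → y i = d i}

/-- The set `D_d` of children of `d ∈ D`: the points of `D_{k_d+1}` agreeing with `d`
on the coordinates `1, …, N_d`. -/
noncomputable def Dch (d : Cant) : Set Cant :=
  {e | (ksupp e).Finite ∧ (ksupp e).ncard = (ksupp d).ncard + 1 ∧
    ∀ i : ℕ+, (i : ℕ) ≤ Nd d → e i = d i}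

/-- The ball `W(d) = B(σ(d), 2^{−ℓ(d)})`. -/
noncomputable def Wb (σ : Cant → Plane) (ℓ : Cant → ℕ) (d : Cant) : Set Plane :=
  Metric.ball (σ d) ((2 : ℝ) ^ (-(ℓ d : ℤ)))

/-- The ball `U(d) = B(σ(d), 2^{−ℓ(d)−1})`. -/
noncomputable def Ub (σ : Cant → Plane) (ℓ : Cant → ℕ) (d : Cant) : Set Plane :=
  Metric.ball (σ d) ((2 : ℝ) ^ (-(ℓ d : ℤ) - 1))

/-- The resulting Cantor set `K = ⋂_n cl (⋃ {W(d) : d ∈ D_n})`. -/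
noncomputable def Kset (σ : Cant → Plane) (ℓ : Cant → ℕ) : Set Plane :=
  ⋂ n : ℕ, closure (⋃ d ∈ {d : Cant | (ksupp d).Finite ∧ (ksupp d).ncard = n}, Wb σ ℓ d)

/-- The closed set `F(d) = cl U(d) \ ⋃_{e ∈ D_d} W(e)`. -/
noncomputable def Fd (σ : Cant → Plane) (ℓ : Cant → ℕ) (d : Cant) : Set Plane :=
  closure (Ub σ ℓ d) \ ⋃ e ∈ Dch d, Wb σ ℓ e

/-- The three conditions imposed on the maps `σ : D → ℝ²` and `ℓ : D → ω`:
(1) `⟨σ(e) : e ∈ D_d⟩` converges to `σ(d)` (in the sense that `σ(e)` is close to `σ(d)`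
    once the added support element `N_e` of the child `e` is large);
(2) `cl W(e) ⊆ U(d) \ {σ(d)}` whenever `e ∈ D_d`;
(3) `{cl W(d) : d ∈ D_n}` is pairwise disjoint for every `n`. -/
def CantorConds (σ : Cant → Plane) (ℓ : Cant → ℕ) : Prop :=
  (∀ d : Cant, (ksupp d).Finite → ∀ ε > (0 : ℝ), ∃ M : ℕ, ∀ e ∈ Dch d,
      M ≤ Nd e → dist (σ e) (σ d) < ε) ∧
  (∀ d : Cant, (ksupp d).Finite → ∀ e ∈ Dch d,
      closure (Wb σ ℓ e) ⊆ Ub σ ℓ d \ {σ d}) ∧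
  (∀ n : ℕ, ∀ d e : Cant, (ksupp d).Finite → (ksupp d).ncard = n →
      (ksupp e).Finite → (ksupp e).ncard = n → d ≠ e →
      Disjoint (closure (Wb σ ℓ d)) (closure (Wb σ ℓ e)))


/-!
Off `K` the closed balls `cl W(d)`, `d ∈ D`, form a locally finite family. A point `x ∉ K`
lies outside some `A_n = cl ⋃_{d ∈ D_n} W(d)`, which contains every ball of level `≥ n`, so only
the levels `< n` matter; each level is locally finite at `x` by induction: near `x` only
finitely many parent balls occur, and the balls of the children of a parent `p` shrink to
`σ(p) ∈ K`, a point distinct from `x`. Since `K` and every `F(d) ⊆ cl W(d)` are closed, `K⁺` is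
therefore closed near every point outside `K`.
-/

open Metric Filter

def LocallyFiniteAt {ι X : Type*} [TopologicalSpace X] (f : ι → Set X) (s : Set ι) (x : X) :
    Prop :=
  ∃ t ∈ 𝓝 x, {i ∈ s | (f i ∩ t).Nonempty}.Finite

namespace LocallyFiniteAt

variable {ι κ X : Type*} [TopologicalSpace X] {f g : ι → Set X} {s s' : Set ι} {x : X}

lemma of_finite (hs : s.Finite) : LocallyFiniteAt f s x :=
  ⟨univ, univ_mem, hs.subset (sep_subset _ _)⟩

lemma mono (h : LocallyFiniteAt g s x) (hfg : ∀ i ∈ s, f i ⊆ g i) : LocallyFiniteAt f s x := by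
  obtain ⟨t, ht, hfin⟩ := h
  exact ⟨t, ht, hfin.subset fun i ⟨hi, hne⟩ =>
    ⟨hi, hne.mono (inter_subset_inter_left _ (hfg i hi))⟩⟩

lemma of_nhds_subset (h : LocallyFiniteAt f s' x) {t : Set X} (ht : t ∈ 𝓝 x)
    (hsub : {i ∈ s | (f i ∩ t).Nonempty} ⊆ s') : LocallyFiniteAt f s x := by
  obtain ⟨t', ht', hfin⟩ := h
  refine ⟨t ∩ t', inter_mem ht ht', hfin.subset ?_⟩
  rintro i ⟨hi, hne⟩
  exact ⟨hsub ⟨hi, hne.mono (inter_subset_inter_right _ inter_subset_left)⟩,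
    hne.mono (inter_subset_inter_right _ inter_subset_right)⟩

lemma biUnion {J : Set κ} (hJ : J.Finite) {s : κ → Set ι}
    (h : ∀ j ∈ J, LocallyFiniteAt f (s j) x) : LocallyFiniteAt f (⋃ j ∈ J, s j) x := by
  choose! t ht hfin using h
  refine ⟨⋂ j ∈ J, t j, (biInter_mem hJ).2 ht, (hJ.biUnion hfin).subset ?_⟩
  rintro i ⟨hi, hne⟩
  obtain ⟨j, hj, hij⟩ := mem_iUnion₂.1 hi
  exact mem_iUnion₂.2 ⟨j, hj, hij, hne.mono (inter_subset_inter_right _ (biInter_subset_of_mem hj))⟩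

end LocallyFiniteAt

lemma isClosed_union_biUnion_of_locallyFiniteAt {ι X : Type*} [TopologicalSpace X] {K : Set X}
    {F : ι → Set X} {s : Set ι} (hK : IsClosed K) (hF : ∀ i ∈ s, IsClosed (F i))
    (hlf : ∀ x ∉ K, LocallyFiniteAt F s x) : IsClosed (K ∪ ⋃ i ∈ s, F i) := by
  refine isOpen_compl_iff.1 (isOpen_iff_mem_nhds.2 fun x hx => ?_)
  rw [mem_compl_iff, mem_union, not_or] at hx
  obtain ⟨t, ht, hfin⟩ := hlf x hx.1
  have hT : IsClosed (⋃ i ∈ {i ∈ s | (F i ∩ t).Nonempty}, F i) :=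
    hfin.isClosed_biUnion fun i hi => hF i hi.1
  have hxT : x ∉ ⋃ i ∈ {i ∈ s | (F i ∩ t).Nonempty}, F i :=
    fun h => hx.2 (biUnion_subset_biUnion_left (sep_subset _ _) h)
  filter_upwards [ht, hK.isOpen_compl.mem_nhds hx.1, hT.isOpen_compl.mem_nhds hxT]
    with y hyt hyK hyT
  rintro (hy | hy)
  · exact hyK hy
  · obtain ⟨i, hi, hyi⟩ := mem_iUnion₂.1 hy
    exact hyT (mem_iUnion₂.2 ⟨i, ⟨hi, y, hyi, hyt⟩, hyi⟩)

def Dlevel (n : ℕ) : Set Cant := {d | (ksupp d).Finite ∧ (ksupp d).ncard = n}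

section Tree

variable {x y d e : Cant} {n : ℕ}

lemma mem_ksupp {i : ℕ+} : (i : ℕ) ∈ ksupp x ↔ x i = true :=
  ⟨fun ⟨_, h⟩ => h, fun h => ⟨i.2, h⟩⟩

lemma eq_of_ksupp_eq (h : ksupp x = ksupp y) : x = y :=
  funext fun i => Bool.eq_iff_iff.2 (by rw [← mem_ksupp, ← mem_ksupp, h])

lemma mem_ksupp_update_of_ne (x : Cant) {i : ℕ+} {n : ℕ} (hn : n ≠ i) (b : Bool) :
    n ∈ ksupp (Function.update x i b) ↔ n ∈ ksupp x :=
  exists_congr fun h => iff_of_eq (congrArg (· = true)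
    (Function.update_of_ne (a := (⟨n, h⟩ : ℕ+)) (fun h' => hn (congrArg Subtype.val h')) b x))

lemma ksupp_update_true (x : Cant) (i : ℕ+) :
    ksupp (Function.update x i true) = insert (i : ℕ) (ksupp x) := by
  ext n
  rcases eq_or_ne n i with rfl | hn
  · exact iff_of_true ⟨i.2, Function.update_self i true x⟩ (mem_insert _ _)
  · rw [mem_ksupp_update_of_ne x hn, mem_insert_iff, or_iff_right hn]

lemma ksupp_update_false (x : Cant) (i : ℕ+) :
    ksupp (Function.update x i false) = ksupp x \ {(i : ℕ)} := by
  ext n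
  rcases eq_or_ne n i with rfl | hn
  · exact iff_of_false
      (fun ⟨_, h⟩ => Bool.false_ne_true ((Function.update_self i false x).symm.trans h))
      fun h => h.2 rfl
  · rw [mem_ksupp_update_of_ne x hn, mem_sdiff_singleton, and_iff_left hn]

lemma le_Nd (hx : (ksupp x).Finite) {i : ℕ} (hi : i ∈ ksupp x) : i ≤ Nd x :=
  le_csSup hx.bddAbove hi

lemma Dch_subset_Dlevel (hd : d ∈ Dlevel n) : Dch d ⊆ Dlevel (n + 1) :=
  fun _ he => ⟨he.1, by rw [he.2.1, hd.2]⟩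

lemma ksupp_eq_insert_Nd_of_mem_Dch (hd : (ksupp d).Finite) (he : e ∈ Dch d) :
    ksupp e = insert (Nd e) (ksupp d) := by
  obtain ⟨-, hcard, hagree⟩ := he
  have agree : ∀ i ≤ Nd d, i ∈ ksupp e ↔ i ∈ ksupp d := fun i hi =>
    exists_congr fun hi0 => by rw [hagree ⟨i, hi0⟩ hi]
  have hsub : ksupp d ⊆ ksupp e := fun i hi => (agree i (le_Nd hd hi)).2 hi
  obtain ⟨n, hn⟩ := ncard_eq_one.1 (by rw [ncard_sdiff hsub hd, hcard]; omega :
    (ksupp e \ ksupp d).ncard = 1)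
  have hnd : n ∈ ksupp e \ ksupp d := hn ▸ rfl
  have hn_gt : Nd d < n := not_le.1 fun h => hnd.2 ((agree n h).1 hnd.1)
  have hsupp : ksupp e = insert n (ksupp d) := by
    rw [← sdiff_union_of_subset hsub, hn, singleton_union]
  have hNe : Nd e = n := by
    refine IsGreatest.csSup_eq ⟨hnd.1, fun i hi => ?_⟩
    rw [hsupp] at hi
    rcases hi with rfl | hi
    exacts [le_rfl, (le_Nd hd hi).trans hn_gt.le]
  rw [hNe, hsupp]

lemma injOn_Nd_Dch (hd : (ksupp d).Finite) : InjOn Nd (Dch d) := fun e₁ h₁ e₂ h₂ h =>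
  eq_of_ksupp_eq <| by
    rw [ksupp_eq_insert_Nd_of_mem_Dch hd h₁, ksupp_eq_insert_Nd_of_mem_Dch hd h₂, h]

lemma finite_Dch_Nd_lt (hd : (ksupp d).Finite) (M : ℕ) : {e ∈ Dch d | Nd e < M}.Finite :=
  Finite.of_finite_image ((finite_Iio M).subset (image_subset_iff.2 fun _ he => he.2))
    ((injOn_Nd_Dch hd).mono (sep_subset _ _))

lemma exists_mem_Dch_Nd_eq (hd : (ksupp d).Finite) (hn : Nd d < n) : ∃ e ∈ Dch d, Nd e = n := by
  let i : ℕ+ := ⟨n, by omega⟩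
  have hnd : n ∉ ksupp d := fun h => (le_Nd hd h).not_gt hn
  have hsupp : ksupp (Function.update d i true) = insert n (ksupp d) := ksupp_update_true d i
  refine ⟨Function.update d i true, ⟨?_, ?_, fun j hj => Function.update_of_ne ?_ _ _⟩, ?_⟩
  · rw [hsupp]; exact hd.insert n
  · rw [hsupp, ncard_insert_of_notMem hnd hd]
  · rintro rfl; exact hj.not_gt hn
  · refine IsGreatest.csSup_eq ⟨hsupp ▸ mem_insert _ _, fun j hj => ?_⟩
    rw [hsupp] at hj
    rcases hj with rfl | hj
    exacts [le_rfl, (le_Nd hd hj).trans hn.le]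

lemma exists_mem_Dlevel_mem_Dch (hd : d ∈ Dlevel (n + 1)) : ∃ p ∈ Dlevel n, d ∈ Dch p := by
  obtain ⟨hfin, hcard⟩ := hd
  have hmax : Nd d ∈ ksupp d :=
    Nat.sSup_mem (nonempty_of_ncard_ne_zero (by omega)) hfin.bddAbove
  let i : ℕ+ := ⟨Nd d, hmax.1⟩
  have hsupp : ksupp (Function.update d i false) = ksupp d \ {Nd d} := ksupp_update_false d i
  have hlt : Nd (Function.update d i false) < Nd d := by
    refine Nat.lt_of_le_pred hmax.1 (csSup_le' fun j hj => ?_)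
    rw [hsupp] at hj
    exact Nat.le_pred_of_lt ((le_Nd hfin hj.1).lt_of_ne hj.2)
  have hpcard : (ksupp (Function.update d i false)).ncard = n := by
    rw [hsupp, ncard_sdiff_singleton_of_mem hmax, hcard, Nat.add_sub_cancel]
  refine ⟨Function.update d i false, ⟨hsupp ▸ hfin.sdiff, hpcard⟩,
    ⟨hfin, by rw [hcard, hpcard], fun j hj => ?_⟩⟩
  exact (Function.update_of_ne (fun h => (hj.trans_lt hlt).ne (congrArg Subtype.val h)) _ _).symm

lemma Dlevel_zero_subsingleton : (Dlevel 0).Subsingleton := fun a ha b hb =>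
  eq_of_ksupp_eq (by rw [(ncard_eq_zero ha.1).1 ha.2, (ncard_eq_zero hb.1).1 hb.2])

end Tree

-- The set `A_n`; `Kset σ ℓ` is definitionally `⋂ n, Kapprox σ ℓ n`.
def Kapprox (σ : Cant → Plane) (ℓ : Cant → ℕ) (n : ℕ) : Set Plane :=
  closure (⋃ d ∈ Dlevel n, Wb σ ℓ d)

section Geometry

variable {σ : Cant → Plane} {ℓ : Cant → ℕ} {d e : Cant}

lemma closure_Wb (d : Cant) :
    closure (Wb σ ℓ d) = closedBall (σ d) ((2 : ℝ) ^ (-(ℓ d : ℤ))) :=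
  closure_ball _ (zpow_pos two_pos _).ne'

lemma Ub_subset_Wb (d : Cant) : Ub σ ℓ d ⊆ Wb σ ℓ d :=
  ball_subset_ball (zpow_le_zpow_right₀ one_le_two (by omega))

lemma isClosed_Fd (d : Cant) : IsClosed (Fd σ ℓ d) :=
  isClosed_closure.sdiff (isOpen_biUnion fun _ _ => isOpen_ball)

lemma Fd_subset_closure_Wb (d : Cant) : Fd σ ℓ d ⊆ closure (Wb σ ℓ d) :=
  sdiff_subset.trans (closure_mono (Ub_subset_Wb d))

lemma isClosed_Kset : IsClosed (Kset σ ℓ) :=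
  isClosed_iInter fun _ => isClosed_closure

lemma closure_Wb_subset_of_mem_Dch (hc : CantorConds σ ℓ) (hd : (ksupp d).Finite)
    (he : e ∈ Dch d) : closure (Wb σ ℓ e) ⊆ closure (Wb σ ℓ d) :=
  fun _ hy => subset_closure (Ub_subset_Wb d (hc.2.1 d hd e he hy).1)

lemma closure_Wb_subset_ball_of_mem_Dch (hc : CantorConds σ ℓ) (hd : (ksupp d).Finite)
    (he : e ∈ Dch d) : closure (Wb σ ℓ e) ⊆ ball (σ d) (2 * dist (σ e) (σ d)) := by
  have hr : (2 : ℝ) ^ (-(ℓ e : ℤ)) < dist (σ d) (σ e) := by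
    have h : σ d ∉ closure (Wb σ ℓ e) := fun hmem => (hc.2.1 d hd e he hmem).2 rfl
    rwa [closure_Wb, mem_closedBall, not_le] at h
  intro y hy
  rw [closure_Wb, mem_closedBall] at hy
  rw [mem_ball]
  linarith [dist_triangle y (σ e) (σ d), dist_comm (σ d) (σ e)]

lemma Kapprox_succ_subset (hc : CantorConds σ ℓ) (n : ℕ) :
    Kapprox σ ℓ (n + 1) ⊆ Kapprox σ ℓ n := by
  refine closure_minimal (iUnion₂_subset fun d hd => ?_) isClosed_closure
  obtain ⟨p, hp, hdp⟩ := exists_mem_Dlevel_mem_Dch hd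
  exact subset_closure.trans ((closure_Wb_subset_of_mem_Dch hc hp.1 hdp).trans
    (closure_mono (subset_biUnion_of_mem hp)))

lemma antitone_Kapprox (hc : CantorConds σ ℓ) : Antitone (Kapprox σ ℓ) :=
  antitone_nat_of_succ_le (Kapprox_succ_subset hc)

lemma closure_Wb_subset_Kapprox (hc : CantorConds σ ℓ) {m n : ℕ} (hd : d ∈ Dlevel m)
    (hnm : n ≤ m) : closure (Wb σ ℓ d) ⊆ Kapprox σ ℓ n :=
  (closure_mono (subset_biUnion_of_mem hd)).trans (antitone_Kapprox hc hnm)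

lemma sigma_mem_Kapprox_add (hc : CantorConds σ ℓ) {m : ℕ} (hd : d ∈ Dlevel m) (k : ℕ) :
    σ d ∈ Kapprox σ ℓ (m + k) := by
  induction k generalizing d m with
  | zero =>
    exact closure_Wb_subset_Kapprox hc hd le_rfl
      (subset_closure (mem_ball_self (zpow_pos two_pos _)))
  | succ k ih =>
    refine isClosed_closure.closure_subset (Metric.mem_closure_iff.2 fun ε hε => ?_)
    obtain ⟨M, hM⟩ := hc.1 d hd.1 ε hε
    obtain ⟨e, he, hNe⟩ := exists_mem_Dch_Nd_eq hd.1 (lt_max_of_lt_right (Nat.lt_succ_self (Nd d)))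
    refine ⟨σ e, ?_, dist_comm (σ d) (σ e) ▸ hM e he (hNe ▸ le_max_left M _)⟩
    rw [← Nat.add_assoc, Nat.add_right_comm]
    exact ih (Dch_subset_Dlevel hd he)

lemma sigma_mem_Kset (hc : CantorConds σ ℓ) (hd : (ksupp d).Finite) : σ d ∈ Kset σ ℓ :=
  mem_iInter.2 fun n => antitone_Kapprox hc (Nat.le_add_left n _)
    (sigma_mem_Kapprox_add hc ⟨hd, rfl⟩ n)

end Geometry

section LocalFiniteness

variable {σ : Cant → Plane} {ℓ : Cant → ℕ} {d : Cant} {x : Plane}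

lemma locallyFiniteAt_Dch (hc : CantorConds σ ℓ) (hd : (ksupp d).Finite) (hx : x ≠ σ d) :
    LocallyFiniteAt (fun e => closure (Wb σ ℓ e)) (Dch d) x := by
  set ε := dist x (σ d)
  have hε : 0 < ε := dist_pos.2 hx
  obtain ⟨M, hM⟩ := hc.1 d hd (ε / 4) (by positivity)
  refine ⟨ball x (ε / 2), ball_mem_nhds x (by positivity), (finite_Dch_Nd_lt hd M).subset ?_⟩
  rintro e ⟨he, y, hyW, hyx⟩
  refine ⟨he, not_le.1 fun hMe => ?_⟩
  have hyd := mem_ball.1 (closure_Wb_subset_ball_of_mem_Dch hc hd he hyW)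
  linarith [hM e he hMe, dist_triangle x y (σ d), mem_ball'.1 hyx]

lemma locallyFiniteAt_Dlevel (hc : CantorConds σ ℓ) (hx : x ∉ Kset σ ℓ) (n : ℕ) :
    LocallyFiniteAt (fun d => closure (Wb σ ℓ d)) (Dlevel n) x := by
  induction n with
  | zero => exact .of_finite Dlevel_zero_subsingleton.finite
  | succ n ih =>
    obtain ⟨t, ht, hparents⟩ := ih
    have hchildren := LocallyFiniteAt.biUnion hparents fun p hp =>
      locallyFiniteAt_Dch hc hp.1.1 (ne_of_mem_of_not_mem (sigma_mem_Kset hc hp.1.1) hx).symm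
    refine hchildren.of_nhds_subset ht ?_
    rintro d ⟨hd, hdt⟩
    obtain ⟨p, hp, hdp⟩ := exists_mem_Dlevel_mem_Dch hd
    exact mem_biUnion
      ⟨hp, hdt.mono (inter_subset_inter_left _ (closure_Wb_subset_of_mem_Dch hc hp.1 hdp))⟩ hdp

lemma locallyFiniteAt_closure_Wb (hc : CantorConds σ ℓ) (hx : x ∉ Kset σ ℓ) :
    LocallyFiniteAt (fun d => closure (Wb σ ℓ d)) {d | (ksupp d).Finite} x := by
  obtain ⟨n, hn⟩ : ∃ n, x ∉ Kapprox σ ℓ n := not_forall.1 (mt mem_iInter.2 hx)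
  refine (LocallyFiniteAt.biUnion (finite_Iio n) fun j _ => locallyFiniteAt_Dlevel hc hx j)
    |>.of_nhds_subset (isClosed_closure.isOpen_compl.mem_nhds hn) ?_
  rintro d ⟨hd, y, hyd, hyn⟩
  exact mem_biUnion (mem_Iio.2 (not_le.1 fun hle =>
    hyn (closure_Wb_subset_Kapprox hc ⟨hd, rfl⟩ hle hyd))) ⟨hd, rfl⟩

end LocalFiniteness

/-- The set `K⁺ = K ∪ ⋃_{d ∈ D} F(d)` is a closed subset of the plane. -/
theorem Kplus_isClosed (σ : Cant → Plane) (ℓ : Cant → ℕ)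
    (hc : CantorConds σ ℓ) :
    IsClosed (Kset σ ℓ ∪ ⋃ d ∈ {d : Cant | (ksupp d).Finite}, Fd σ ℓ d) :=
  isClosed_union_biUnion_of_locallyFiniteAt isClosed_Kset (fun d _ => isClosed_Fd d)
    fun _ hx => (locallyFiniteAt_closure_Wb hc hx).mono fun d _ => Fd_subset_closure_Wb d
end

section
/- Let h, f, g be as follows: h : C → K a homeomorphism with h(d) = σ(d) and h[V_d] = K ∩ W(d) for all d ∈ D, f Kuratowski's function, and g : K⁺ → ℝ with g(z) = f(h⁻¹(z)) for z ∈ K and g(z) = f(d) for z ∈ F(d), d ∈ D. Suppose f̄ : ℝ² → ℝ agrees with g on K⁺ and is continuous at every point of ℝ² \ σ[D]. If L ⊆ ℝ² meets only finitely many of the sets W(d), d ∈ D, then the restriction of f̄ to L (with the subspace topology) is continuous. -/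
open Set Topology

open scoped Classical in
/-- Kuratowski's function `f(x) = Σ_j (−1)^{c_x(j)} 2^{−j}`, where `c_x` enumerates the
support of `x` in increasing order; here the summation index `j : ℕ` is the 0-based
version of the paper's 1-based position index, so the weight is `2^{−(j+1)}`. -/
noncomputable def kf (x : Cant) : ℝ :=
  ∑' j : ℕ, if (ksupp x).Infinite ∨ j < (ksupp x).ncard then
    (-1 : ℝ) ^ (Nat.nth (· ∈ ksupp x) j) * (2 : ℝ) ^ (-(j + 1 : ℤ)) else 0

/-- The set `K⁺ = K ∪ ⋃_{d ∈ D} F(d)`. -/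
noncomputable def Kplus (σ : Cant → Plane) (ℓ : Cant → ℕ) : Set Plane :=
  Kset σ ℓ ∪ ⋃ d ∈ {d : Cant | (ksupp d).Finite}, Fd σ ℓ d

/-- Let `h : C → K` be a homeomorphism with `h(d) = σ(d)` and `h[V_d] = K ∩ W(d)` for all
`d ∈ D`, let `f` be Kuratowski's function, and let `g` satisfy `g(z) = f(h⁻¹(z))` on `K`
and `g ≡ f(d)` on each `F(d)`.  Suppose `f̄ : ℝ² → ℝ` agrees with `g` on `K⁺` and is
continuous at every point of `ℝ² \ σ[D]`.  If `L ⊆ ℝ²` meets only finitely many of the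
sets `W(d)`, `d ∈ D`, then the restriction of `f̄` to `L` is continuous. -/
theorem extended_kf_continuousOn_of_meets_finitely_many (σ : Cant → Plane) (ℓ : Cant → ℕ)
    (hc : CantorConds σ ℓ) (h : Cant ≃ₜ (Kset σ ℓ))
    (hσ : ∀ d : Cant, (ksupp d).Finite → (h d : Plane) = σ d)
    (hV : ∀ d : Cant, (ksupp d).Finite →
      Subtype.val '' (h '' Vd d) = Kset σ ℓ ∩ Wb σ ℓ d)
    (g : Plane → ℝ)
    (hgK : ∀ z : Plane, ∀ hz : z ∈ Kset σ ℓ, g z = kf (h.symm ⟨z, hz⟩))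
    (hgF : ∀ d : Cant, (ksupp d).Finite → ∀ z ∈ Fd σ ℓ d, g z = kf d)
    (fbar : Plane → ℝ)
    (hagree : ∀ z ∈ Kplus σ ℓ, fbar z = g z)
    (hcont : ∀ z : Plane, z ∉ σ '' {d : Cant | (ksupp d).Finite} → ContinuousAt fbar z)
    (L : Set Plane)
    (hL : {d : Cant | (ksupp d).Finite ∧ (L ∩ Wb σ ℓ d).Nonempty}.Finite) :
    ContinuousOn fbar L := by
  intro z hzL
  by_cases hz : z ∈ σ '' {d : Cant | (ksupp d).Finite}
  · obtain ⟨d, hd, rfl⟩ := hz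
    simp only [Set.mem_setOf_eq] at hd
    -- The finite set of children of d whose W-ball meets L
    have hT : {e : Cant | e ∈ Dch d ∧ (L ∩ Wb σ ℓ e).Nonempty}.Finite :=
      hL.subset (fun e he => ⟨he.1.1, he.2⟩)
    set C : Set Plane := ⋃ e ∈ hT.toFinset, closure (Wb σ ℓ e) with hC
    have hCclosed : IsClosed C :=
      isClosed_biUnion_finset (fun e _ => isClosed_closure)
    have hzC : σ d ∉ C := by
      intro hmem
      rw [hC, Set.mem_iUnion₂] at hmem
      obtain ⟨e, he, hze⟩ := hmem
      rw [Set.Finite.mem_toFinset] at he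
      have := hc.2.1 d hd e he.1 hze
      exact this.2 rfl
    obtain ⟨r1, hr1pos, hr1⟩ := Metric.isOpen_iff.1 hCclosed.isOpen_compl (σ d) hzC
    set r2 : ℝ := (2 : ℝ) ^ (-(ℓ d : ℤ) - 1) with hr2
    have hr2pos : 0 < r2 := zpow_pos (by norm_num) _
    set r : ℝ := min r1 r2 with hrdef
    have hrpos : 0 < r := lt_min hr1pos hr2pos
    -- every point of the r-ball that lies in L ∪ {σ d} belongs to F(d)
    have hball : ∀ w : Plane, dist w (σ d) < r → (w ∈ L ∨ w = σ d) → w ∈ Fd σ ℓ d := by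
      intro w hw hwL
      constructor
      · exact subset_closure (Metric.mem_ball.2 (lt_of_lt_of_le hw (min_le_right _ _)))
      · intro hwU
        rw [Set.mem_iUnion₂] at hwU
        obtain ⟨e, he, hwe⟩ := hwU
        have hwC : w ∈ C := by
          rcases hwL with hwL | rfl
          · have heT : e ∈ hT.toFinset := by
              rw [Set.Finite.mem_toFinset]
              exact ⟨he, ⟨w, hwL, hwe⟩⟩
            exact Set.mem_biUnion heT (subset_closure hwe)
          · exact absurd rfl (hc.2.1 d hd e he (subset_closure hwe)).2
        exact hr1 (Metric.mem_ball.2 (lt_of_lt_of_le hw (min_le_left _ _))) hwC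
    have hval : ∀ w : Plane, dist w (σ d) < r → (w ∈ L ∨ w = σ d) → fbar w = kf d := by
      intro w hw hwL
      have hwF := hball w hw hwL
      have hwK : w ∈ Kplus σ ℓ := Or.inr (Set.mem_biUnion hd hwF)
      rw [hagree w hwK, hgF d hd w hwF]
    have hzval : fbar (σ d) = kf d :=
      hval (σ d) (by simpa using hrpos) (Or.inr rfl)
    have hev : ∀ᶠ w in nhdsWithin (σ d) L, fbar w = kf d := by
      filter_upwards [self_mem_nhdsWithin,
        mem_nhdsWithin_of_mem_nhds (Metric.ball_mem_nhds (σ d) hrpos)] with w hwL hwb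
      exact hval w (Metric.mem_ball.1 hwb) (Or.inl hwL)
    rw [ContinuousWithinAt, hzval]
    exact Filter.Tendsto.congr' (hev.mono fun w hw => hw.symm) tendsto_const_nhds
  · exact (hcont z hz).continuousWithinAt
end
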